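/- arXiv:1101.2973 — 2 statements merged into one kernel-verified Lean document; each statement's English description precedes it below -/
import Mathlib

section
/- Let f be a nonnegative submodular function on the ground set {1,…,n} with multilinear extension F (regarded as a polynomial on ℝ^n, with gradient ∇F). Let P ⊆ [0,1]^n be a convex, compact, down-monotone set. Let v : [0,1] → ℝ^n be an integrable function with v(τ) ∈ P for all τ, and define the trajectory y(t) = ∫₀^t v(τ) dτ. Assume that for all τ ∈ [0,1] and all w ∈ P, w · ∇F(y(τ)) ≤ v(τ) · ∇F(y(τ)). Let F_DMAX = max_{0 ≤ t ≤ 1} F(y(1) − y(t)). Then y(1) ∈ P, and for every x ∈ P, F(y(1)) ≥ (1 − e^{−1}) · (F(x ∨ y(1)) − F_DMAX), where (x ∨ y)_i = max(x_i, y_i). -/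
/-!
Fixing all coordinates but one, `F` is affine, and submodularity of `f` makes every partial
derivative `∂ⱼF` antitone on `[0,1]ⁿ`. Raising the coordinates of `a` to those of `a + z` one
at a time then shows that `F` is concave along nonnegative directions:
`F a + z ⬝ ∇F (a + z) ≤ F (a + z) ≤ F a + z ⬝ ∇F a`, and the increment `F (a + z) - F a`
shrinks as `a` grows.

Put `Λ = F (x ∨ y 1) - F_DMAX`. Shrinking increments give
`F (x ∨ y 1) ≤ F (x ∨ y τ) + F (y 1 - y τ)`, and `x ∨ y τ - y τ ≤ x` lies in `P`, so concavity
and greediness give `Λ - F (y τ) ≤ (x ∨ y τ - y τ) ⬝ ∇F (y τ) ≤ v τ ⬝ ∇F (y τ)`. Since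
`y t - y s = ∫ₛᵗ v` and `∇F ∘ y` is continuous, concavity turns this into the differential
inequality `(F ∘ y)' ≥ Λ - F ∘ y` for right derivatives, and Grönwall's inequality yields
`F (y 1) ≥ (1 - e⁻¹) Λ`. Finally `y 1 ∈ P` as the mean of `v` over `[0, 1]`.
-/

open Finset

/-- The multilinear extension of a set function `f` on the ground set `Fin n`,
regarded (by the same polynomial formula) as a function on all of `ℝⁿ`. -/
noncomputable def multilinearExt {n : ℕ} (f : Finset (Fin n) → ℝ)
    (x : Fin n → ℝ) : ℝ :=
  ∑ S : Finset (Fin n), f S * ((∏ i ∈ S, x i) * ∏ i ∈ Sᶜ, (1 - x i))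

/-- The gradient of the multilinear extension: since `F` is multilinear, its
partial derivative `∂F/∂x_j` at `x` equals `F(x[j:=1]) − F(x[j:=0])`. -/
noncomputable def gradMultilinearExt {n : ℕ} (f : Finset (Fin n) → ℝ)
    (x : Fin n → ℝ) (j : Fin n) : ℝ :=
  multilinearExt f (Function.update x j 1) - multilinearExt f (Function.update x j 0)

noncomputable def multilinearExtOn {n : ℕ} (s : Finset (Fin n)) (h : Finset (Fin n) → ℝ)
    (x : Fin n → ℝ) : ℝ :=
  ∑ T ∈ s.powerset, h T * ∏ k ∈ s, if k ∈ T then x k else 1 - x k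

section MultilinearExtOn

variable {n : ℕ}

theorem multilinearExt_eq_multilinearExtOn_univ (f : Finset (Fin n) → ℝ) (x : Fin n → ℝ) :
    multilinearExt f x = multilinearExtOn univ f x := by
  simp only [multilinearExt, multilinearExtOn, powerset_univ, prod_ite, filter_mem_eq_inter,
    univ_inter, filter_not, compl_eq_univ_sdiff]

theorem multilinearExtOn_insert {s : Finset (Fin n)} {i : Fin n} (hi : i ∉ s)
    (h : Finset (Fin n) → ℝ) (x : Fin n → ℝ) :
    multilinearExtOn (insert i s) h x =
      multilinearExtOn s (fun T => (1 - x i) * h T + x i * h (insert i T)) x := by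
  rw [multilinearExtOn, sum_powerset_insert hi, multilinearExtOn, ← sum_add_distrib]
  refine sum_congr rfl fun T hT => ?_
  have hiT : i ∉ T := fun h => hi (mem_powerset.mp hT h)
  have hrest : ∀ k ∈ s, (if k ∈ insert i T then x k else 1 - x k) =
      if k ∈ T then x k else 1 - x k := fun k hk => by
    simp only [mem_insert, ne_of_mem_of_not_mem hk hi, false_or]
  rw [prod_insert hi, prod_insert hi, prod_congr rfl hrest]
  simp only [hiT, if_false, mem_insert_self, if_true]
  ring

theorem multilinearExtOn_update_of_notMem {s : Finset (Fin n)} {i : Fin n} (hi : i ∉ s)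
    (h : Finset (Fin n) → ℝ) (x : Fin n → ℝ) (t : ℝ) :
    multilinearExtOn s h (Function.update x i t) = multilinearExtOn s h x := by
  refine sum_congr rfl fun T _ => congrArg _ (prod_congr rfl fun k hk => ?_)
  rw [Function.update_of_ne (ne_of_mem_of_not_mem hk hi)]

theorem multilinearExtOn_mono {s : Finset (Fin n)} {h h' : Finset (Fin n) → ℝ}
    (hh : ∀ T ⊆ s, h T ≤ h' T) {x : Fin n → ℝ} (hx : x ∈ Set.Icc 0 1) :
    multilinearExtOn s h x ≤ multilinearExtOn s h' x := by
  refine sum_le_sum fun T hT => mul_le_mul_of_nonneg_right (hh T (mem_powerset.mp hT)) ?_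
  refine prod_nonneg fun k _ => ?_
  have := hx.1 k; have := hx.2 k
  split_ifs <;> simp_all

theorem multilinearExtOn_antitoneOn (s : Finset (Fin n)) {h : Finset (Fin n) → ℝ}
    (hh : ∀ T T', T ⊆ T' → T' ⊆ s → h T' ≤ h T) {x x' : Fin n → ℝ}
    (h0 : 0 ≤ x) (hxx' : x ≤ x') (h1 : x' ≤ 1) :
    multilinearExtOn s h x' ≤ multilinearExtOn s h x := by
  induction s using Finset.induction generalizing h with
  | empty => simp [multilinearExtOn]
  | insert i s hi ih =>
    have hhi : ∀ T ⊆ s, h (insert i T) ≤ h T := fun T hT =>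
      hh _ _ (subset_insert i T) (insert_subset_insert i hT)
    -- Expanding along `i`, the coefficients `g t` stay antitone in `T` and decrease in `t`.
    set g : ℝ → Finset (Fin n) → ℝ := fun t T => (1 - t) * h T + t * h (insert i T)
    have hg : ∀ t ∈ Set.Icc (0 : ℝ) 1, ∀ T T', T ⊆ T' → T' ⊆ s → g t T' ≤ g t T := by
      intro t ht T T' hTT' hT's
      have := hh _ _ hTT' (hT's.trans (subset_insert i s))
      have := hh _ _ (insert_subset_insert i hTT') (insert_subset_insert i hT's)
      simp only [g]; nlinarith [ht.1, ht.2]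
    have hx'i : x' i ∈ Set.Icc (0 : ℝ) 1 := ⟨(h0 i).trans (hxx' i), h1 i⟩
    have hx : x ∈ Set.Icc 0 1 := ⟨h0, hxx'.trans h1⟩
    calc multilinearExtOn (insert i s) h x' = multilinearExtOn s (g (x' i)) x' :=
          multilinearExtOn_insert hi h x'
      _ ≤ multilinearExtOn s (g (x' i)) x := ih (hg _ hx'i)
      _ ≤ multilinearExtOn s (g (x i)) x := multilinearExtOn_mono (fun T hT => by
          have := hhi T hT; have := hxx' i
          simp only [g]; nlinarith) hx
      _ = multilinearExtOn (insert i s) h x := (multilinearExtOn_insert hi h x).symm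

end MultilinearExtOn

section MultilinearExt

variable {n : ℕ} (f : Finset (Fin n) → ℝ)

theorem multilinearExt_update_eq_multilinearExtOn (x : Fin n → ℝ) (j : Fin n) (t : ℝ) :
    multilinearExt f (Function.update x j t) = multilinearExtOn (univ.erase j)
      (fun T => (1 - t) * f T + t * f (insert j T)) x := by
  have h := multilinearExtOn_insert (notMem_erase j univ) f (Function.update x j t)
  rw [insert_erase (mem_univ j)] at h
  rw [multilinearExt_eq_multilinearExtOn_univ, h, Function.update_self,
    multilinearExtOn_update_of_notMem (notMem_erase j univ)]

theorem gradMultilinearExt_eq_multilinearExtOn (x : Fin n → ℝ) (j : Fin n) :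
    gradMultilinearExt f x j =
      multilinearExtOn (univ.erase j) (fun T => f (insert j T) - f T) x := by
  simp only [gradMultilinearExt, multilinearExt_update_eq_multilinearExtOn, multilinearExtOn,
    ← sum_sub_distrib]
  exact sum_congr rfl fun T _ => by ring

theorem multilinearExt_update_sub (x : Fin n → ℝ) (j : Fin n) (t : ℝ) :
    multilinearExt f (Function.update x j t) - multilinearExt f x =
      (t - x j) * gradMultilinearExt f x j := by
  have hx := multilinearExt_update_eq_multilinearExtOn f x j (x j)
  rw [Function.update_eq_self] at hx
  simp only [hx, gradMultilinearExt_eq_multilinearExtOn, multilinearExt_update_eq_multilinearExtOn,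
    multilinearExtOn, ← sum_sub_distrib, mul_sum]
  exact sum_congr rfl fun T _ => by ring

theorem multilinearExt_nonneg (hf : ∀ S, 0 ≤ f S) {x : Fin n → ℝ} (hx : x ∈ Set.Icc 0 1) :
    0 ≤ multilinearExt f x := by
  rw [multilinearExt_eq_multilinearExtOn_univ]
  calc 0 = multilinearExtOn univ 0 x := by simp [multilinearExtOn]
    _ ≤ multilinearExtOn univ f x := multilinearExtOn_mono (fun T _ => hf T) hx

theorem continuous_multilinearExt : Continuous (multilinearExt f) := by
  unfold multilinearExt; fun_prop

theorem continuous_gradMultilinearExt : Continuous (gradMultilinearExt f) :=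
  continuous_pi fun j =>
    ((continuous_multilinearExt f).comp (continuous_id.update j continuous_const)).sub
      ((continuous_multilinearExt f).comp (continuous_id.update j continuous_const))

theorem gradMultilinearExt_antitoneOn
    (hsub : ∀ A B : Finset (Fin n), f A + f B ≥ f (A ∪ B) + f (A ∩ B)) (j : Fin n)
    {x x' : Fin n → ℝ} (h0 : 0 ≤ x) (hxx' : x ≤ x') (h1 : x' ≤ 1) :
    gradMultilinearExt f x' j ≤ gradMultilinearExt f x j := by
  rw [gradMultilinearExt_eq_multilinearExtOn, gradMultilinearExt_eq_multilinearExtOn]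
  refine multilinearExtOn_antitoneOn _ (fun T T' hTT' hT' => ?_) h0 hxx' h1
  -- Submodularity at `insert j T` and `T'` is the diminishing marginal gain of `j`.
  have hj : j ∉ T' := fun h => (mem_erase.mp (hT' h)).1 rfl
  have hunion : insert j T ∪ T' = insert j T' := by
    rw [insert_union, union_eq_right.mpr hTT']
  have hinter : insert j T ∩ T' = T := by
    rw [insert_inter_of_notMem hj, inter_eq_left.mpr hTT']
  linarith [hsub (insert j T) T', hunion ▸ hinter ▸ hsub (insert j T) T']

end MultilinearExt

section Concavity

variable {n : ℕ}

def truncCoords (z : Fin n → ℝ) (m : ℕ) : Fin n → ℝ :=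
  fun i => if (i : ℕ) < m then z i else 0

theorem truncCoords_nonneg {z : Fin n → ℝ} (hz : 0 ≤ z) (m : ℕ) : 0 ≤ truncCoords z m :=
  fun i => by unfold truncCoords; split_ifs; exacts [hz i, le_rfl]

theorem truncCoords_le {z : Fin n → ℝ} (hz : 0 ≤ z) (m : ℕ) : truncCoords z m ≤ z :=
  fun i => by unfold truncCoords; split_ifs; exacts [le_rfl, hz i]

variable (f : Finset (Fin n) → ℝ)

-- Telescoping along the path `a + truncCoords z m`, `m = 0, …, n`, which raises one coordinate
-- at a time.
theorem multilinearExt_add_sub_eq_sum (a z : Fin n → ℝ) :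
    multilinearExt f (a + z) - multilinearExt f a =
      ∑ k, z k * gradMultilinearExt f (a + truncCoords z k) k := by
  suffices h : ∀ m ≤ n, multilinearExt f (a + truncCoords z m) - multilinearExt f a =
      ∑ k ∈ univ.filter (fun k : Fin n => (k : ℕ) < m),
        z k * gradMultilinearExt f (a + truncCoords z k) k by
    have hz : truncCoords z n = z := funext fun i => if_pos i.is_lt
    simpa [hz] using h n le_rfl
  intro m
  induction m with
  | zero =>
    have hz : truncCoords z 0 = 0 := funext fun i => if_neg (Nat.not_lt_zero _)
    simp [hz]
  | succ m ih =>
    intro hm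
    set k : Fin n := ⟨m, hm⟩
    have hpath : a + truncCoords z (m + 1) =
        Function.update (a + truncCoords z m) k (a k + z k) := by
      funext i
      by_cases hik : i = k
      · subst hik; simp [truncCoords, k]
      · have : (i : ℕ) ≠ m := fun h => hik (Fin.ext h)
        simp only [truncCoords, Pi.add_apply, Function.update_of_ne hik]
        congr 2
        exact propext (by omega)
    have hfilter : univ.filter (fun i : Fin n => (i : ℕ) < m + 1) =
        insert k (univ.filter fun i : Fin n => (i : ℕ) < m) := by
      ext i; simp only [mem_filter, mem_univ, true_and, mem_insert, Fin.ext_iff, k]; omega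
    have hstep := multilinearExt_update_sub f (a + truncCoords z m) k (a k + z k)
    have hk : (a + truncCoords z m) k = a k := by simp [truncCoords, k]
    rw [hk, add_sub_cancel_left] at hstep
    rw [hpath, hfilter, sum_insert (by simp [k]), ← ih (by omega)]
    linarith

variable {f} (hsub : ∀ A B : Finset (Fin n), f A + f B ≥ f (A ∪ B) + f (A ∩ B))
include hsub

theorem multilinearExt_add_le {a z : Fin n → ℝ} (h0 : 0 ≤ a) (hz : 0 ≤ z) (h1 : a + z ≤ 1) :
    multilinearExt f (a + z) ≤ multilinearExt f a + ∑ k, z k * gradMultilinearExt f a k := by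
  have hgrad : ∀ k : Fin n,
      gradMultilinearExt f (a + truncCoords z k) k ≤ gradMultilinearExt f a k :=
    fun k => gradMultilinearExt_antitoneOn f hsub k h0
      (le_add_of_nonneg_right (truncCoords_nonneg hz k))
      ((add_le_add le_rfl (truncCoords_le hz k)).trans h1)
  have := sum_le_sum (s := univ) fun k _ => mul_le_mul_of_nonneg_left (hgrad k) (hz k)
  linarith [multilinearExt_add_sub_eq_sum f a z]

theorem le_multilinearExt_add {a z : Fin n → ℝ} (h0 : 0 ≤ a) (hz : 0 ≤ z) (h1 : a + z ≤ 1) :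
    multilinearExt f a + ∑ k, z k * gradMultilinearExt f (a + z) k ≤ multilinearExt f (a + z) := by
  have hgrad : ∀ k : Fin n, gradMultilinearExt f (a + z) k ≤
      gradMultilinearExt f (a + truncCoords z k) k :=
    fun k => gradMultilinearExt_antitoneOn f hsub k (add_nonneg h0 (truncCoords_nonneg hz k))
      (add_le_add le_rfl (truncCoords_le hz k)) h1
  have := sum_le_sum (s := univ) fun k _ => mul_le_mul_of_nonneg_left (hgrad k) (hz k)
  linarith [multilinearExt_add_sub_eq_sum f a z]

theorem multilinearExt_add_sub_le_of_le {a c z : Fin n → ℝ} (hc : 0 ≤ c) (hca : c ≤ a)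
    (hz : 0 ≤ z) (h1 : a + z ≤ 1) :
    multilinearExt f (a + z) - multilinearExt f a ≤
      multilinearExt f (c + z) - multilinearExt f c := by
  have hgrad : ∀ k : Fin n, gradMultilinearExt f (a + truncCoords z k) k ≤
      gradMultilinearExt f (c + truncCoords z k) k :=
    fun k => gradMultilinearExt_antitoneOn f hsub k (add_nonneg hc (truncCoords_nonneg hz k))
      (add_le_add hca le_rfl) ((add_le_add le_rfl (truncCoords_le hz k)).trans h1)
  have := sum_le_sum (s := univ) fun k _ => mul_le_mul_of_nonneg_left (hgrad k) (hz k)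
  linarith [multilinearExt_add_sub_eq_sum f a z, multilinearExt_add_sub_eq_sum f c z]

theorem multilinearExt_sup_le_add (hf : ∀ S, 0 ≤ f S) {x u u' : Fin n → ℝ}
    (hx : x ∈ Set.Icc 0 1) (hu : 0 ≤ u) (huu' : u ≤ u') (hu' : u' ≤ 1) :
    multilinearExt f (x ⊔ u') ≤ multilinearExt f (x ⊔ u) + multilinearExt f (u' - u) := by
  set z := x ⊔ u' - x ⊔ u
  set c := u' - u - z
  have hz : 0 ≤ z := sub_nonneg.mpr (sup_le_sup_left huu' x)
  have hc : 0 ≤ c := fun i => by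
    have : 0 ≤ u i := hu i; have := huu' i
    simp only [c, z, Pi.sub_apply, Pi.sup_apply, Pi.zero_apply]
    grind
  have hca : c ≤ x ⊔ u := fun i => by
    have : 0 ≤ u i := hu i; have := huu' i
    simp only [c, z, Pi.sub_apply, Pi.sup_apply]
    grind
  have h1 : x ⊔ u + z ≤ 1 := by simpa [z] using sup_le hx.2 hu'
  have hmono := multilinearExt_add_sub_le_of_le hsub hc hca hz h1
  have hc1 : c ∈ Set.Icc 0 1 := ⟨hc, hca.trans (le_add_of_nonneg_right hz |>.trans h1)⟩
  have := multilinearExt_nonneg f hf hc1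
  simp only [z, c, add_sub_cancel, sub_add_cancel] at hmono
  linarith

theorem multilinearExt_sup_sub_sub_le_sum_mul_grad (hf : ∀ S, 0 ≤ f S) {P : Set (Fin n → ℝ)}
    (hPsub : P ⊆ Set.Icc 0 1) (hPdown : ∀ x y : Fin n → ℝ, 0 ≤ x → x ≤ y → y ∈ P → x ∈ P)
    {x u u' d : Fin n → ℝ} (hx : x ∈ P) (hu : 0 ≤ u) (huu' : u ≤ u') (hu' : u' ≤ 1)
    (hd : ∀ w ∈ P, ∑ j, w j * gradMultilinearExt f u j ≤ ∑ j, d j * gradMultilinearExt f u j) :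
    multilinearExt f (x ⊔ u') - multilinearExt f (u' - u) - multilinearExt f u ≤
      ∑ j, d j * gradMultilinearExt f u j := by
  have hsup := multilinearExt_sup_le_add hsub hf (hPsub hx) hu huu' hu'
  have hw : x ⊔ u - u ∈ P := hPdown _ x (sub_nonneg.mpr le_sup_right)
    (sub_le_iff_le_add.mpr (sup_le (le_add_of_nonneg_right hu)
      (le_add_of_nonneg_left (hPsub hx).1))) hx
  have hup := multilinearExt_add_le hsub hu (sub_nonneg.mpr (le_sup_right (a := x)))
    (by rw [add_sub_cancel]; exact sup_le (hPsub hx).2 (hu'.trans' huu'))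
  rw [add_sub_cancel] at hup
  linarith [hd _ hw]

end Concavity

open Filter Topology MeasureTheory

theorem one_sub_exp_mul_le_of_slope {φ : ℝ → ℝ} {Λ a b : ℝ} (hφ : ContinuousOn φ (Set.Icc a b))
    (ha : 0 ≤ φ a)
    (hslope : ∀ x ∈ Set.Ico a b, ∀ η > 0, ∀ᶠ z in 𝓝[>] x, (z - x) * (Λ - φ x - η) ≤ φ z - φ x) :
    ∀ t ∈ Set.Icc a b, (1 - Real.exp (-(t - a))) * Λ ≤ φ t := by
  intro t ht
  have hf' : ∀ x ∈ Set.Ico a b, ∀ r, φ x - Λ < r →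
      ∃ᶠ z in 𝓝[>] x, (z - x)⁻¹ * ((Λ - φ z) - (Λ - φ x)) < r := by
    intro x hx r hr
    refine Eventually.frequently ?_
    filter_upwards [hslope x hx _ (half_pos (sub_pos.mpr hr)), self_mem_nhdsWithin]
      with z hz (hxz : x < z)
    rw [inv_mul_lt_iff₀ (sub_pos.mpr hxz)]
    nlinarith
  -- Grönwall for `Λ - φ`, whose right slopes are at most `-(Λ - φ)`.
  have := le_gronwallBound_of_liminf_deriv_right_le (f := fun t => Λ - φ t)
    (continuousOn_const.sub hφ) hf'
    (by linarith : Λ - φ a ≤ Λ) (fun x _ => (by linarith : φ x - Λ ≤ -1 * (Λ - φ x) + 0)) t ht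
  rw [gronwallBound_ε0, neg_one_mul] at this
  linarith

section Trajectory

variable {n : ℕ} {v y : ℝ → Fin n → ℝ}

theorem trajectory_one_mem {P : Set (Fin n → ℝ)} (hPconv : Convex ℝ P) (hPclosed : IsClosed P)
    (hvInt : ∀ i, IntervalIntegrable (fun τ => v τ i) volume 0 1)
    (hvP : ∀ τ ∈ Set.Icc (0 : ℝ) 1, v τ ∈ P) (hy : ∀ t i, y t i = ∫ τ in (0 : ℝ)..t, v τ i) :
    y 1 ∈ P := by
  have : IsProbabilityMeasure (volume.restrict (Set.Ioc (0 : ℝ) 1)) := ⟨by simp⟩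
  have hy1 : y 1 = ∫ τ in Set.Ioc 0 1, v τ := funext fun i => by
    rw [hy, intervalIntegral.integral_of_le zero_le_one, eval_integral fun i => (hvInt i).1]
  rw [hy1]
  exact hPconv.integral_mem hPclosed
    (ae_restrict_of_forall_mem measurableSet_Ioc fun τ hτ => hvP τ (Set.Ioc_subset_Icc_self hτ))
    (Integrable.of_eval fun i => (hvInt i).1)

theorem intervalIntegrable_of_mem_Icc {g : ℝ → ℝ} (hg : IntervalIntegrable g volume 0 1) {s t : ℝ}
    (hs : s ∈ Set.Icc (0 : ℝ) 1) (ht : t ∈ Set.Icc (0 : ℝ) 1) : IntervalIntegrable g volume s t :=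
  hg.mono_set (Set.uIcc_subset_uIcc (by rwa [Set.uIcc_of_le zero_le_one])
    (by rwa [Set.uIcc_of_le zero_le_one]))

theorem trajectory_sub (hvInt : ∀ i, IntervalIntegrable (fun τ => v τ i) volume 0 1)
    (hy : ∀ t i, y t i = ∫ τ in (0 : ℝ)..t, v τ i) {s t : ℝ} (hs : s ∈ Set.Icc (0 : ℝ) 1)
    (ht : t ∈ Set.Icc (0 : ℝ) 1) (i : Fin n) : y t i - y s i = ∫ τ in s..t, v τ i := by
  have h0 : (0 : ℝ) ∈ Set.Icc (0 : ℝ) 1 := Set.left_mem_Icc.mpr zero_le_one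
  rw [hy, hy, intervalIntegral.integral_interval_sub_left
    (intervalIntegrable_of_mem_Icc (hvInt i) h0 ht) (intervalIntegrable_of_mem_Icc (hvInt i) h0 hs)]

theorem trajectory_mono (hvInt : ∀ i, IntervalIntegrable (fun τ => v τ i) volume 0 1)
    (hv : ∀ τ ∈ Set.Icc (0 : ℝ) 1, v τ ∈ Set.Icc 0 1) (hy : ∀ t i, y t i = ∫ τ in (0 : ℝ)..t, v τ i)
    {s t : ℝ} (hs : 0 ≤ s) (hst : s ≤ t) (ht : t ≤ 1) : y s ≤ y t := fun i => by
  have hdiff := trajectory_sub hvInt hy ⟨hs, hst.trans ht⟩ ⟨hs.trans hst, ht⟩ i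
  have : 0 ≤ ∫ τ in s..t, v τ i := intervalIntegral.integral_nonneg hst fun τ hτ =>
    (hv τ ⟨hs.trans hτ.1, hτ.2.trans ht⟩).1 i
  linarith

theorem trajectory_mem_Icc (hvInt : ∀ i, IntervalIntegrable (fun τ => v τ i) volume 0 1)
    (hv : ∀ τ ∈ Set.Icc (0 : ℝ) 1, v τ ∈ Set.Icc 0 1) (hy : ∀ t i, y t i = ∫ τ in (0 : ℝ)..t, v τ i)
    {t : ℝ} (ht : t ∈ Set.Icc (0 : ℝ) 1) : y t ∈ Set.Icc 0 1 := by
  have h0 : y 0 = 0 := funext fun i => by simp [hy]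
  refine ⟨h0 ▸ trajectory_mono hvInt hv hy le_rfl ht.1 ht.2, fun i => ?_⟩
  calc y t i = ∫ τ in (0 : ℝ)..t, v τ i := hy t i
    _ ≤ ∫ τ in (0 : ℝ)..t, (1 : ℝ) := intervalIntegral.integral_mono_on ht.1
        (intervalIntegrable_of_mem_Icc (hvInt i) (Set.left_mem_Icc.mpr zero_le_one) ht)
        intervalIntegrable_const fun τ hτ => (hv τ ⟨hτ.1, hτ.2.trans ht.2⟩).2 i
    _ ≤ 1 := by simpa using ht.2

theorem continuousOn_trajectory (hvInt : ∀ i, IntervalIntegrable (fun τ => v τ i) volume 0 1)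
    (hy : ∀ t i, y t i = ∫ τ in (0 : ℝ)..t, v τ i) : ContinuousOn y (Set.Icc 0 1) := by
  refine continuousOn_pi.mpr fun i => ?_
  simp_rw [hy]
  simpa [Set.uIcc_of_le zero_le_one] using
    intervalIntegral.continuousOn_primitive_interval' (hvInt i) Set.left_mem_uIcc

theorem trajectory_sub_sum_mul (hvInt : ∀ i, IntervalIntegrable (fun τ => v τ i) volume 0 1)
    (hy : ∀ t i, y t i = ∫ τ in (0 : ℝ)..t, v τ i) {s t : ℝ} (hs : s ∈ Set.Icc (0 : ℝ) 1)
    (ht : t ∈ Set.Icc (0 : ℝ) 1) (c : Fin n → ℝ) :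
    ∑ k, (y t k - y s k) * c k = ∫ τ in s..t, ∑ k, v τ k * c k := by
  rw [intervalIntegral.integral_finsetSum fun k _ =>
    (intervalIntegrable_of_mem_Icc (hvInt k) hs ht).mul_const _]
  exact sum_congr rfl fun k _ => by
    rw [intervalIntegral.integral_mul_const, trajectory_sub hvInt hy hs ht]

end Trajectory

theorem sum_mul_le_sum_mul_add {ι : Type*} [Fintype ι] {w g g' : ι → ℝ} {δ : ℝ}
    (hw : w ∈ Set.Icc 0 1) (hg : ∀ k, g k ≤ g' k + δ) (hδ : 0 ≤ δ) :
    ∑ k, w k * g k ≤ ∑ k, w k * g' k + Fintype.card ι * δ := by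
  have hterm : ∀ k, w k * g k ≤ w k * g' k + δ := fun k => by
    have h0 : 0 ≤ w k := hw.1 k
    have h1 : w k ≤ 1 := hw.2 k
    nlinarith [hg k]
  calc ∑ k, w k * g k ≤ ∑ k, (w k * g' k + δ) := sum_le_sum fun k _ => hterm k
    _ = ∑ k, w k * g' k + Fintype.card ι * δ := by simp [sum_add_distrib]

theorem mul_le_multilinearExt_trajectory_sub {n : ℕ} {f : Finset (Fin n) → ℝ}
    (hsub : ∀ A B : Finset (Fin n), f A + f B ≥ f (A ∪ B) + f (A ∩ B)) {v y : ℝ → Fin n → ℝ}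
    (hvInt : ∀ i, IntervalIntegrable (fun τ => v τ i) volume 0 1)
    (hv : ∀ τ ∈ Set.Icc (0 : ℝ) 1, v τ ∈ Set.Icc 0 1)
    (hy : ∀ t i, y t i = ∫ τ in (0 : ℝ)..t, v τ i) {x z : ℝ} (hx : x ∈ Set.Icc (0 : ℝ) 1)
    (hz : z ∈ Set.Icc (0 : ℝ) 1) (hxz : x ≤ z) {c : ℝ}
    (hc : ∀ τ ∈ Set.Icc x z, c ≤ ∑ k, v τ k * gradMultilinearExt f (y z) k) :
    (z - x) * c ≤ multilinearExt f (y z) - multilinearExt f (y x) := by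
  have hlower := le_multilinearExt_add hsub (trajectory_mem_Icc hvInt hv hy hx).1
    (sub_nonneg.mpr (trajectory_mono hvInt hv hy hx.1 hxz hz.2))
    (by simpa using (trajectory_mem_Icc hvInt hv hy hz).2)
  rw [add_sub_cancel] at hlower
  have hint : IntervalIntegrable (fun τ => ∑ k, v τ k * gradMultilinearExt f (y z) k)
      volume x z := by
    have := IntervalIntegrable.sum univ fun k _ =>
      (intervalIntegrable_of_mem_Icc (hvInt k) hx hz).mul_const (gradMultilinearExt f (y z) k)
    rwa [Finset.sum_fn] at this
  calc (z - x) * c = ∫ _ in x..z, c := by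
        simp only [intervalIntegral.integral_const, smul_eq_mul]
    _ ≤ ∫ τ in x..z, ∑ k, v τ k * gradMultilinearExt f (y z) k :=
        intervalIntegral.integral_mono_on hxz intervalIntegrable_const hint hc
    _ = ∑ k, (y z - y x) k * gradMultilinearExt f (y z) k :=
        (trajectory_sub_sum_mul hvInt hy hx hz _).symm
    _ ≤ multilinearExt f (y z) - multilinearExt f (y x) := by linarith

theorem eventually_le_multilinearExt_trajectory_sub {n : ℕ} {f : Finset (Fin n) → ℝ}
    (hsub : ∀ A B : Finset (Fin n), f A + f B ≥ f (A ∪ B) + f (A ∩ B)) {v y : ℝ → Fin n → ℝ}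
    (hvInt : ∀ i, IntervalIntegrable (fun τ => v τ i) volume 0 1)
    (hv : ∀ τ ∈ Set.Icc (0 : ℝ) 1, v τ ∈ Set.Icc 0 1)
    (hy : ∀ t i, y t i = ∫ τ in (0 : ℝ)..t, v τ i) {Λ : ℝ}
    (hgain : ∀ τ ∈ Set.Icc (0 : ℝ) 1,
      Λ - multilinearExt f (y τ) ≤ ∑ j, v τ j * gradMultilinearExt f (y τ) j)
    {x : ℝ} (hx : x ∈ Set.Ico (0 : ℝ) 1) {η : ℝ} (hη : 0 < η) :
    ∀ᶠ z in 𝓝[>] x, (z - x) * (Λ - multilinearExt f (y x) - η) ≤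
      multilinearExt f (y z) - multilinearExt f (y x) := by
  set φ := fun t => multilinearExt f (y t)
  set g := fun t => gradMultilinearExt f (y t)
  have hyc := continuousOn_trajectory hvInt hy
  have hxI : x ∈ Set.Icc (0 : ℝ) 1 := Set.Ico_subset_Icc_self hx
  -- `φ` moves by less than `ε` and `g` by less than `2ε` in each coordinate, so the total error
  -- is `ε + n * 2ε = η`.
  set ε := η / (2 * n + 1)
  have hε : 0 < ε := by positivity
  have hη : η = ε + n * (2 * ε) := by
    rw [show ε + n * (2 * ε) = ε * (2 * n + 1) by ring, div_mul_cancel₀ η (by positivity)]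
  have hnear : {τ | dist (φ τ) (φ x) < ε ∧ dist (g τ) (g x) < ε} ∈ 𝓝[Set.Icc 0 1] x :=
    (Metric.tendsto_nhds.mp ((continuous_multilinearExt f).comp_continuousOn hyc x hxI) ε hε).and
      (Metric.tendsto_nhds.mp ((continuous_gradMultilinearExt f).comp_continuousOn hyc x hxI) ε hε)
  obtain ⟨δ, hδ, hδnear⟩ := Metric.mem_nhdsWithin_iff.mp hnear
  filter_upwards [Ioo_mem_nhdsGT (lt_min hx.2 (lt_add_of_pos_right x hδ))] with z hz
  have hzI : z ∈ Set.Icc (0 : ℝ) 1 := ⟨hxI.1.trans hz.1.le, hz.2.le.trans (min_le_left _ _)⟩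
  have hclose : ∀ τ ∈ Set.Icc x z, τ ∈ Set.Icc (0 : ℝ) 1 ∧
      dist (φ τ) (φ x) < ε ∧ dist (g τ) (g x) < ε := fun τ hτ => by
    have hτI : τ ∈ Set.Icc (0 : ℝ) 1 := ⟨hxI.1.trans hτ.1, hτ.2.trans hzI.2⟩
    refine ⟨hτI, hδnear ⟨?_, hτI⟩⟩
    rw [Metric.mem_ball, Real.dist_eq, abs_of_nonneg (sub_nonneg.mpr hτ.1)]
    linarith [hτ.2, hz.2.trans_le (min_le_right _ _)]
  refine mul_le_multilinearExt_trajectory_sub hsub hvInt hv hy hxI hzI hz.1.le fun τ hτ => ?_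
  obtain ⟨hτI, hφτ, hgτ⟩ := hclose τ hτ
  have hgz := (hclose z ⟨hz.1.le, le_rfl⟩).2.2
  have hg : ∀ k, g τ k ≤ g z k + 2 * ε := fun k => by
    have hτk := (dist_le_pi_dist (g τ) (g x) k).trans_lt hgτ
    have hzk := (dist_le_pi_dist (g z) (g x) k).trans_lt hgz
    rw [Real.dist_eq, abs_lt] at hτk hzk
    linarith
  have hsum := sum_mul_le_sum_mul_add (hv τ hτI) hg (by positivity)
  rw [Fintype.card_fin] at hsum
  rw [Real.dist_eq, abs_lt] at hφτ
  linarith [hgain τ hτI]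

/-- continuous greedy process for non-monotone functions.
Let `f` be nonnegative submodular with multilinear extension `F`, let
`P ⊆ [0,1]ⁿ` be convex, compact and down-monotone, and let
`y(t) = ∫₀ᵗ v(τ) dτ` be the greedy trajectory, where `v(τ) ∈ P` maximizes
`w ↦ w · ∇F(y(τ))` over `w ∈ P`. With
`F_DMAX = max_{0 ≤ t ≤ 1} F(y(1) − y(t))`, we have `y(1) ∈ P` and, for every
`x ∈ P`, `F(y(1)) ≥ (1 − e^{−1})·(F(x ∨ y(1)) − F_DMAX)`. -/
theorem stmt_12 {n : ℕ} (f : Finset (Fin n) → ℝ)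
    (hsub : ∀ A B : Finset (Fin n), f A + f B ≥ f (A ∪ B) + f (A ∩ B))
    (hnonneg : ∀ A : Finset (Fin n), 0 ≤ f A)
    (P : Set (Fin n → ℝ))
    (hPsub : P ⊆ Set.Icc (0 : Fin n → ℝ) 1)
    (hPconv : Convex ℝ P) (hPcomp : IsCompact P)
    (hPdown : ∀ x y : Fin n → ℝ, 0 ≤ x → x ≤ y → y ∈ P → x ∈ P)
    (v : ℝ → Fin n → ℝ)
    (hvInt : ∀ i, IntervalIntegrable (fun τ => v τ i) MeasureTheory.volume 0 1)
    (hvP : ∀ τ ∈ Set.Icc (0 : ℝ) 1, v τ ∈ P)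
    (y : ℝ → Fin n → ℝ)
    (hy : ∀ t i, y t i = ∫ τ in (0 : ℝ)..t, v τ i)
    (hgreedy : ∀ τ ∈ Set.Icc (0 : ℝ) 1, ∀ w ∈ P,
      ∑ j, w j * gradMultilinearExt f (y τ) j ≤
        ∑ j, v τ j * gradMultilinearExt f (y τ) j)
    (FDMAX : ℝ)
    (hFDMAX : IsGreatest
      ((fun t => multilinearExt f (y 1 - y t)) '' Set.Icc (0 : ℝ) 1) FDMAX) :
    y 1 ∈ P ∧ ∀ x ∈ P,
      multilinearExt f (y 1) ≥
        (1 - Real.exp (-1)) *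
          (multilinearExt f (fun i => max (x i) (y 1 i)) - FDMAX) := by
  have hv : ∀ τ ∈ Set.Icc (0 : ℝ) 1, v τ ∈ Set.Icc 0 1 := fun τ hτ => hPsub (hvP τ hτ)
  have hy1 := trajectory_mem_Icc hvInt hv hy (Set.right_mem_Icc.mpr zero_le_one)
  refine ⟨trajectory_one_mem hPconv hPcomp.isClosed hvInt hvP hy, fun x hx => ?_⟩
  have hgain : ∀ τ ∈ Set.Icc (0 : ℝ) 1, multilinearExt f (x ⊔ y 1) - FDMAX -
      multilinearExt f (y τ) ≤ ∑ j, v τ j * gradMultilinearExt f (y τ) j := fun τ hτ => by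
    have := multilinearExt_sup_sub_sub_le_sum_mul_grad hsub hnonneg hPsub hPdown hx
      (trajectory_mem_Icc hvInt hv hy hτ).1 (trajectory_mono hvInt hv hy hτ.1 hτ.2 le_rfl) hy1.2
      (hgreedy τ hτ)
    linarith [hFDMAX.2 ⟨τ, hτ, rfl⟩]
  have hφ0 := multilinearExt_nonneg f hnonneg
    (trajectory_mem_Icc hvInt hv hy (Set.left_mem_Icc.mpr zero_le_one))
  have := one_sub_exp_mul_le_of_slope
    ((continuous_multilinearExt f).comp_continuousOn (continuousOn_trajectory hvInt hy)) hφ0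
    (fun x hx η hη => eventually_le_multilinearExt_trajectory_sub hsub hvInt hv hy hgain hx hη)
    1 (Set.right_mem_Icc.mpr zero_le_one)
  simp only [sub_zero] at this
  exact this
end

section
/- Let f be a nonnegative submodular function on the ground set {1,…,n} (n ≥ 1) with multilinear extension F, and let f_max = max_{1 ≤ i ≤ n} f({i}). Let x, z ∈ [0,1]^n with z ≤ x componentwise and x_i − z_i ≤ δ for all i, where δ ≥ 0. Then F(x) − F(z) ≤ n·δ·f_max. -/
/-!
The multilinear extension `F` is affine in each coordinate, with slope in coordinate `i` the
expected marginal gain `𝔼[f(R ∪ {i}) - f(R)]` over a random set `R` not containing `i`. By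
submodularity and `f ∅ ≥ 0` every marginal gain is at most `f {i} ≤ f_max`. Moving from `z` to `x`
one coordinate at a time therefore takes `n` steps, each raising `F` by at most `δ · f_max`.
-/

open Finset

section SubsetProb

variable {α : Type*} [DecidableEq α]

/-- The probability that a random subset of `T`, containing each `j` independently with
probability `w j`, equals `S`. -/
def subsetProb (w : α → ℝ) (T S : Finset α) : ℝ :=
  (∏ j ∈ S, w j) * ∏ j ∈ T \ S, (1 - w j)

theorem sum_subsetProb (w : α → ℝ) (T : Finset α) :
    ∑ S ∈ T.powerset, subsetProb w T S = 1 := by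
  simp only [subsetProb, ← prod_add, add_sub_cancel, prod_const_one]

theorem subsetProb_nonneg {w : α → ℝ} (hw : ∀ j, w j ∈ Set.Icc (0 : ℝ) 1) (T S : Finset α) :
    0 ≤ subsetProb w T S :=
  mul_nonneg (prod_nonneg fun j _ => (hw j).1)
    (prod_nonneg fun j _ => sub_nonneg.2 (hw j).2)

theorem subsetProb_update {w : α → ℝ} {T S : Finset α} {i : α} (hi : i ∉ T) (hS : S ⊆ T)
    (a : ℝ) : subsetProb (Function.update w i a) T S = subsetProb w T S := by
  have hne : ∀ j ∈ T, Function.update w i a j = w j :=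
    fun j hj => Function.update_of_ne (ne_of_mem_of_not_mem hj hi) _ _
  unfold subsetProb
  rw [prod_congr rfl fun j hj => hne j (hS hj),
    prod_congr rfl fun j hj => congrArg (1 - ·) (hne j (mem_sdiff.1 hj).1)]

theorem sum_powerset_insert_mul_subsetProb (g : Finset α → ℝ) (w : α → ℝ) {T : Finset α}
    {i : α} (hi : i ∉ T) :
    ∑ S ∈ (insert i T).powerset, g S * subsetProb w (insert i T) S
      = ∑ S ∈ T.powerset, ((1 - w i) * g S + w i * g (insert i S)) * subsetProb w T S := by
  rw [sum_powerset_insert hi, ← sum_add_distrib]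
  refine sum_congr rfl fun S hS => ?_
  have hiS : i ∉ S := fun h => hi (mem_powerset.1 hS h)
  have hiTS : i ∉ T \ S := fun h => hi (mem_sdiff.1 h).1
  rw [subsetProb, subsetProb, subsetProb, insert_sdiff_of_notMem _ hiS, prod_insert hiTS,
    insert_sdiff_insert, sdiff_insert_of_notMem hi, prod_insert hiS]
  ring

theorem sum_mul_subsetProb_le {g : Finset α → ℝ} {w : α → ℝ} {T : Finset α} {c : ℝ}
    (hw : ∀ j, w j ∈ Set.Icc (0 : ℝ) 1) (hg : ∀ S ⊆ T, g S ≤ c) :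
    ∑ S ∈ T.powerset, g S * subsetProb w T S ≤ c :=
  calc ∑ S ∈ T.powerset, g S * subsetProb w T S
      ≤ ∑ S ∈ T.powerset, c * subsetProb w T S :=
        sum_le_sum fun S hS =>
          mul_le_mul_of_nonneg_right (hg S (mem_powerset.1 hS)) (subsetProb_nonneg hw T S)
    _ = c := by rw [← mul_sum, sum_subsetProb, mul_one]

end SubsetProb

theorem sub_le_singleton_of_submodular {α : Type*} [DecidableEq α] {f : Finset α → ℝ}
    (hsub : ∀ A B : Finset α, f A + f B ≥ f (A ∪ B) + f (A ∩ B)) (hempty : 0 ≤ f ∅)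
    {i : α} {S : Finset α} (hi : i ∉ S) :
    f (insert i S) - f S ≤ f {i} := by
  have h := hsub S {i}
  rw [union_singleton, inter_singleton_of_notMem hi] at h
  linarith

theorem multilinearExt_eq_sum_powerset_erase {n : ℕ} (f : Finset (Fin n) → ℝ)
    (w : Fin n → ℝ) (i : Fin n) :
    multilinearExt f w = ∑ S ∈ (univ.erase i).powerset,
      ((1 - w i) * f S + w i * f (insert i S)) * subsetProb w (univ.erase i) S := by
  rw [← sum_powerset_insert_mul_subsetProb f w (notMem_erase i univ), insert_erase (mem_univ i),
    powerset_univ]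
  simp only [multilinearExt, subsetProb, compl_eq_univ_sdiff]

theorem multilinearExt_update_sub_s13 {n : ℕ} (f : Finset (Fin n) → ℝ) (w : Fin n → ℝ)
    (i : Fin n) (a b : ℝ) :
    multilinearExt f (Function.update w i a) - multilinearExt f (Function.update w i b)
      = (a - b) * ∑ S ∈ (univ.erase i).powerset,
          (f (insert i S) - f S) * subsetProb w (univ.erase i) S := by
  rw [multilinearExt_eq_sum_powerset_erase _ _ i, multilinearExt_eq_sum_powerset_erase _ _ i,
    ← sum_sub_distrib, mul_sum]
  refine sum_congr rfl fun S hS => ?_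
  rw [subsetProb_update (notMem_erase i univ) (mem_powerset.1 hS),
    subsetProb_update (notMem_erase i univ) (mem_powerset.1 hS)]
  simp only [Function.update_self]
  ring

theorem multilinearExt_update_sub_le {n : ℕ} {f : Finset (Fin n) → ℝ}
    (hsub : ∀ A B : Finset (Fin n), f A + f B ≥ f (A ∪ B) + f (A ∩ B)) (hempty : 0 ≤ f ∅)
    {c : ℝ} (hsingleton : ∀ i, f {i} ≤ c)
    {w : Fin n → ℝ} (hw : ∀ j, w j ∈ Set.Icc (0 : ℝ) 1) (i : Fin n) {a b : ℝ} (hba : b ≤ a) :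
    multilinearExt f (Function.update w i a) - multilinearExt f (Function.update w i b)
      ≤ (a - b) * c := by
  rw [multilinearExt_update_sub_s13]
  refine mul_le_mul_of_nonneg_left (sum_mul_subsetProb_le hw fun S hS => ?_) (sub_nonneg.2 hba)
  exact (sub_le_singleton_of_submodular hsub hempty fun h => notMem_erase i univ (hS h)).trans
    (hsingleton i)

theorem sub_le_card_mul_of_update_sub_le {ι β : Type*} [Fintype ι] [DecidableEq ι]
    (F : (ι → β) → ℝ) {s : Set β} {x z : ι → β} (hx : ∀ i, x i ∈ s) (hz : ∀ i, z i ∈ s) {c : ℝ}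
    (hstep : ∀ w : ι → β, (∀ j, w j ∈ s) → ∀ i,
      F (Function.update w i (x i)) - F (Function.update w i (z i)) ≤ c) :
    F x - F z ≤ Fintype.card ι * c := by
  suffices h : ∀ t : Finset ι, F (t.piecewise x z) - F z ≤ #t * c by
    simpa [piecewise_univ] using h univ
  intro t
  induction t using Finset.induction_on with
  | empty => simp
  | insert i t hi ih =>
    have hw : ∀ j, t.piecewise x z j ∈ s := fun j => t.piecewise_cases x z (· ∈ s) (hx j) (hz j)
    have := hstep _ hw i
    rw [← piecewise_insert, Function.update_eq_self_iff.2 (piecewise_eq_of_notMem _ _ _ hi).symm]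
      at this
    rw [card_insert_of_notMem hi]
    push_cast
    linarith

theorem stmt_13_general {n : ℕ} (f : Finset (Fin n) → ℝ)
    (hsub : ∀ A B : Finset (Fin n), f A + f B ≥ f (A ∪ B) + f (A ∩ B))
    (hnonneg : ∀ A : Finset (Fin n), 0 ≤ f A)
    (fmax : ℝ)
    (hfmax : IsGreatest (Set.range fun i : Fin n => f {i}) fmax)
    (x z : Fin n → ℝ) (δ : ℝ)
    (hx : ∀ i, x i ∈ Set.Icc (0 : ℝ) 1) (hz : ∀ i, z i ∈ Set.Icc (0 : ℝ) 1)
    (hzx : ∀ i, z i ≤ x i) (hdiff : ∀ i, x i - z i ≤ δ) :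
    multilinearExt f x - multilinearExt f z ≤ n * δ * fmax := by
  obtain ⟨⟨i₀, rfl⟩, hsingleton⟩ := hfmax
  have hstep : ∀ w : Fin n → ℝ, (∀ j, w j ∈ Set.Icc (0 : ℝ) 1) → ∀ i,
      multilinearExt f (Function.update w i (x i)) - multilinearExt f (Function.update w i (z i))
        ≤ δ * f {i₀} := fun w hw i =>
    (multilinearExt_update_sub_le hsub (hnonneg ∅) (fun i => hsingleton ⟨i, rfl⟩) hw i
      (hzx i)).trans (mul_le_mul_of_nonneg_right (hdiff i) (hnonneg _))
  have := sub_le_card_mul_of_update_sub_le (multilinearExt f) hx hz hstep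
  rwa [Fintype.card_fin, ← mul_assoc] at this

/-- For a nonnegative submodular `f` on `{1,…,n}` (`n ≥ 1`) with multilinear
extension `F` and `f_max = max_i f({i})`: if `z ≤ x` are points of `[0,1]ⁿ`
with `x_i − z_i ≤ δ` for all `i` (`δ ≥ 0`), then `F(x) − F(z) ≤ n·δ·f_max`. -/
theorem stmt_13 {n : ℕ} (hn : 1 ≤ n) (f : Finset (Fin n) → ℝ)
    (hsub : ∀ A B : Finset (Fin n), f A + f B ≥ f (A ∪ B) + f (A ∩ B))
    (hnonneg : ∀ A : Finset (Fin n), 0 ≤ f A)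
    (fmax : ℝ)
    (hfmax : IsGreatest (Set.range fun i : Fin n => f {i}) fmax)
    (x z : Fin n → ℝ) (δ : ℝ) (hδ : 0 ≤ δ)
    (hx : ∀ i, x i ∈ Set.Icc (0 : ℝ) 1) (hz : ∀ i, z i ∈ Set.Icc (0 : ℝ) 1)
    (hzx : ∀ i, z i ≤ x i) (hdiff : ∀ i, x i - z i ≤ δ) :
    multilinearExt f x - multilinearExt f z ≤ n * δ * fmax :=
  stmt_13_general f hsub hnonneg fmax hfmax x z δ hx hz hzx hdiff
end
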